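/- arXiv:1910.14629 — 3 statements merged into one kernel-verified Lean document; each statement's English description precedes it below -/
import Mathlib

section
/- If Φ_L is surjective — that is, every c ∈ C can be written c = d + c_1 + … + c_n with d ∈ Δ and each c_i ∈ C_{λ_i} for some irreducibles λ_i of R — then Φ_R is surjective: for every c ∈ C and every irreducible λ of R there exists d ∈ C such that c − d ∈ C^λ and d ∈ C^μ for every irreducible μ of R that is not a *-associate of λ. -/
open Classical in
/-- `S(λ)`: `λ` itself if `λ` is an associate of its involutive image `λ*`,
and `λ · λ*` otherwise. -/
noncomputable def Sdual {R : Type*} [CommRing R] (σ : R →+* R) (l : R) : R :=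
  if Associated l (σ l) then l else l * σ l

/-- `λ` and `μ` are `*`-associates: `λ` is an associate of `μ` or of `μ* = σ μ`. -/
def StarAssoc {R : Type*} [CommRing R] (σ : R →+* R) (l m : R) : Prop :=
  Associated l m ∨ Associated l (σ m)

/-- The subset `Δ ⊆ C` of classes of elements whose `χ`-value is a unit. -/
def DeltaSet {K C R : Type*} [AddCommMonoid K] [AddCommGroup C] [CommRing R]
    (π : K →+ C) (χ : K → R) : Set C :=
  {c | ∃ k, π k = c ∧ IsUnit (χ k)}

/-- The `λ`-primary part `C_λ ⊆ C`: classes of elements whose `χ`-value is an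
associate of a power of `S(λ)`. -/
def Cprim {K C R : Type*} [AddCommMonoid K] [AddCommGroup C] [CommRing R]
    (σ : R →+* R) (π : K →+ C) (χ : K → R) (l : R) : Set C :=
  {c | ∃ k, π k = c ∧ ∃ n : ℕ, Associated (χ k) (Sdual σ l ^ n)}

/-- The coprimary part `C^λ ⊆ C`: classes of elements whose `χ`-value is not
divisible by `λ`. -/
def Cco {K C R : Type*} [AddCommMonoid K] [AddCommGroup C] [CommRing R]
    (π : K →+ C) (χ : K → R) (l : R) : Set C :=
  {c | ∃ k, π k = c ∧ ¬ l ∣ χ k}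

/-!
An element of `C` that is `λ`-primary has a `χ`-value whose only prime divisors are
`*`-associates of `λ`, so it lies in `C^μ` for every `μ` that is not a `*`-associate of `λ`;
elements of `Δ` lie in every `C^μ`. Since `χ` is multiplicative up to units and irreducibles
are prime in a UFD, each `C^μ` is closed under addition. Hence, writing
`c = d + ∑ cᵢ` by surjectivity of `Φ_L`, the partial sum over the `cᵢ` whose `λᵢ` is a
`*`-associate of `λ` is the required preimage of the `λ`-component.
-/

section StarAssoc

variable {R : Type*} [CommRing R] {σ : R →+* R}

lemma Irreducible.map_of_involutive (hσ : Function.Involutive σ) {l : R} (hl : Irreducible l) :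
    Irreducible (σ l) :=
  hl.map (RingEquiv.ofBijective σ hσ.bijective)

lemma StarAssoc.trans_symm (hσ : Function.Involutive σ) {l m n : R}
    (hln : StarAssoc σ l n) (hmn : StarAssoc σ m n) : StarAssoc σ l m := by
  rcases hln with hln | hln <;> rcases hmn with hmn | hmn
  · exact .inl (hln.trans hmn.symm)
  · have hσm : Associated (σ m) n := by simpa only [hσ n] using hmn.map σ
    exact .inr (hln.trans hσm.symm)
  · exact .inr (hln.trans (hmn.map σ).symm)
  · exact .inl (hln.trans hmn.symm)

lemma starAssoc_of_dvd_sdual [IsDomain R] (hσ : Function.Involutive σ) {μ l : R}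
    (hμ : Prime μ) (hl : Irreducible l) (hdvd : μ ∣ Sdual σ l) : StarAssoc σ μ l := by
  unfold Sdual at hdvd
  split_ifs at hdvd
  · exact .inl (hμ.irreducible.associated_of_dvd hl hdvd)
  · rcases hμ.dvd_or_dvd hdvd with h | h
    · exact .inl (hμ.irreducible.associated_of_dvd hl h)
    · exact .inr (hμ.irreducible.associated_of_dvd (hl.map_of_involutive hσ) h)

end StarAssoc

section Coprimary

variable {K C R : Type*} [AddCommMonoid K] [AddCommGroup C] [CommRing R]
  {π : K →+ C} {χ : K → R}

lemma isUnit_apply_zero_of_associated_mul [IsDomain R] (hχ0 : χ 0 ≠ 0)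
    (hD2 : ∀ k k', Associated (χ (k + k')) (χ k * χ k')) : IsUnit (χ 0) :=
  isUnit_of_associated_mul (by simpa only [add_zero] using (hD2 0 0).symm) hχ0

def coprimarySubmonoid (hχ0 : IsUnit (χ 0))
    (hD2 : ∀ k k', Associated (χ (k + k')) (χ k * χ k')) {μ : R} (hμ : Prime μ) :
    AddSubmonoid C where
  carrier := Cco π χ μ
  zero_mem' := ⟨0, map_zero π, fun hdvd => hμ.not_isUnit (isUnit_of_dvd_unit hdvd hχ0)⟩
  add_mem' := by
    rintro _ _ ⟨k, rfl, hk⟩ ⟨k', rfl, hk'⟩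
    refine ⟨k + k', map_add π k k', fun hdvd => ?_⟩
    rcases hμ.dvd_or_dvd (hdvd.trans (hD2 k k').dvd) with h | h
    exacts [hk h, hk' h]

lemma deltaSet_subset_cco {μ : R} (hμ : ¬IsUnit μ) : DeltaSet π χ ⊆ Cco π χ μ := by
  rintro _ ⟨k, rfl, hk⟩
  exact ⟨k, rfl, fun hdvd => hμ (isUnit_of_dvd_unit hdvd hk)⟩

lemma cprim_subset_cco [IsDomain R] {σ : R →+* R} (hσ : Function.Involutive σ) {μ l : R}
    (hμ : Prime μ) (hl : Irreducible l) (hμl : ¬StarAssoc σ μ l) :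
    Cprim σ π χ l ⊆ Cco π χ μ := by
  rintro _ ⟨k, rfl, n, hk⟩
  exact ⟨k, rfl, fun hdvd =>
    hμl (starAssoc_of_dvd_sdual hσ hμ hl (hμ.dvd_of_dvd_pow (hdvd.trans hk.dvd)))⟩

end Coprimary

theorem statement1_general
    {K C R : Type*} [AddCommMonoid K] [AddCommGroup C]
    [CommRing R] [IsDomain R] [UniqueFactorizationMonoid R]
    (π : K →+ C)
    (σ : R →+* R) (hσ : ∀ r, σ (σ r) = r)
    (χ : K → R) (hχ : ∀ k, χ k ≠ 0)
    (hD2 : ∀ k k', Associated (χ (k + k')) (χ k * χ k'))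
    (hL : ∀ c : C, ∃ d ∈ DeltaSet π χ, ∃ n : ℕ, ∃ lam : Fin n → R, ∃ cs : Fin n → C,
      (∀ i, Irreducible (lam i)) ∧ (∀ i, cs i ∈ Cprim σ π χ (lam i)) ∧
      c = d + ∑ i, cs i) :
    ∀ c : C, ∀ l : R, Irreducible l → ∃ d : C,
      c - d ∈ Cco π χ l ∧
      ∀ μ : R, Irreducible μ → ¬ StarAssoc σ l μ → d ∈ Cco π χ μ := by
  classical
  intro c l hl
  obtain ⟨d₀, hd₀, n, lam, cs, hlam, hcs, rfl⟩ := hL c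
  have hprime : ∀ {μ : R}, Irreducible μ → Prime μ :=
    UniqueFactorizationMonoid.irreducible_iff_prime.mp
  let S (μ : R) (hμ : Irreducible μ) := coprimarySubmonoid (π := π)
    (isUnit_apply_zero_of_associated_mul (hχ 0) hD2) hD2 (hprime hμ)
  refine ⟨∑ i with StarAssoc σ l (lam i), cs i, ?_, fun μ hμ hμl => ?_⟩
  · have hrest : d₀ + ∑ i, cs i - ∑ i with StarAssoc σ l (lam i), cs i
        = d₀ + ∑ i with ¬StarAssoc σ l (lam i), cs i := by
      rw [← Finset.sum_filter_add_sum_filter_not _ (fun i => StarAssoc σ l (lam i))]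
      abel
    rw [hrest]
    refine (S l hl).add_mem (deltaSet_subset_cco hl.not_isUnit hd₀) ((S l hl).sum_mem ?_)
    intro i hi
    exact cprim_subset_cco hσ (hprime hl) (hlam i) (Finset.mem_filter.mp hi).2 (hcs i)
  · refine (S μ hμ).sum_mem fun i hi => cprim_subset_cco hσ (hprime hμ) (hlam i) ?_ (hcs i)
    exact fun hμi => hμl ((Finset.mem_filter.mp hi).2.trans_symm hσ hμi)

/-- If `Φ_L` is surjective (every class is `Δ` plus a sum of primary classes), then
`Φ_R` is surjective. -/
theorem statement1
    {K C R : Type*} [AddCommMonoid K] [AddCommGroup C]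
    [CommRing R] [IsDomain R] [UniqueFactorizationMonoid R]
    (π : K →+ C) (hπ : Function.Surjective π)
    (σ : R →+* R) (hσ : ∀ r, σ (σ r) = r)
    (χ : K → R) (hχ : ∀ k, χ k ≠ 0)
    (hD1 : ∀ k, Associated (σ (χ k)) (χ k))
    (hD2 : ∀ k k', Associated (χ (k + k')) (χ k * χ k'))
    (hD3 : ∀ k, ∃ j, π j = -π k ∧ Associated (χ j) (χ k))
    (hL : ∀ c : C, ∃ d ∈ DeltaSet π χ, ∃ n : ℕ, ∃ lam : Fin n → R, ∃ cs : Fin n → C,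
      (∀ i, Irreducible (lam i)) ∧ (∀ i, cs i ∈ Cprim σ π χ (lam i)) ∧
      c = d + ∑ i, cs i) :
    ∀ c : C, ∀ l : R, Irreducible l → ∃ d : C,
      c - d ∈ Cco π χ l ∧
      ∀ μ : R, Irreducible μ → ¬ StarAssoc σ l μ → d ∈ Cco π χ μ :=
  statement1_general π σ hσ χ hχ hD2 hL
end

section
/- Let A be a subgroup of C and q : C → G := C/A the quotient map. If A is right primary decomposable (with respect to Δ(A) = Δ ∩ A and A^λ = C^λ ∩ A) and G is right primary decomposable (with respect to Δ(G) = q(Δ) and G^λ = q(C^λ)), then C is right primary decomposable (with respect to Δ and C^λ). -/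
/-- Right primary decomposability of a subgroup with carrier `S` of an abelian group `G`,
with respect to a designated subset `D` ("`Δ`") and coprimary parts `Q λ`:
an element of `S` lying in every `Q λ` lies in `D`, and for every `g ∈ S` and
irreducible `λ` there is `d ∈ S` with `g - d ∈ Q λ` and `d ∈ Q μ` for every
irreducible `μ` not `*`-associate to `λ`. -/
def RightPD {R G : Type*} [CommRing R] [AddCommGroup G] (σ : R →+* R)
    (S D : Set G) (Q : R → Set G) : Prop :=
  (∀ g ∈ S, (∀ l : R, Irreducible l → g ∈ Q l) → g ∈ D) ∧
  (∀ g ∈ S, ∀ l : R, Irreducible l → ∃ d ∈ S, g - d ∈ Q l ∧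
    ∀ μ : R, Irreducible μ → ¬ StarAssoc σ l μ → d ∈ Q μ)

/-!
Decomposability of `G = C ⧸ A` at `c` and `λ` gives `x ∈ C^λ` such that `z = c - x` lies in
`C^μ + A` for every `μ` not `*`-associate to `λ`. Writing `z = π k`, only the finitely many
`*`-classes of prime factors of `χ k` matter: `z` already lies in every other `C^μ`.
Decomposing in `A` at a representative of each of these classes and summing the corrections
gives `e ∈ A` with `z - e ∈ C^μ` for all these `μ` and `e` in every other `C^ν`, including `C^λ`;
so `d = z - e` works. This uses that `C^λ` is a subgroup for prime `λ`, since `χ` is additive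
up to units. For the first condition, `G` puts `g` in `δ + A` with `δ ∈ Δ ⊆ ⋂ C^λ`, then `A`
puts `g - δ` in `Δ`, which is closed under addition.
-/

theorem Finset.exists_subset_pairwise_not_rel_covering {α : Type*} {r : α → α → Prop}
    (hrefl : ∀ a, r a a) (hsymm : ∀ {a b}, r a b → r b a) (F : Finset α) :
    ∃ L ⊆ F, (L : Set α).Pairwise (fun a b => ¬ r a b) ∧ ∀ f ∈ F, ∃ a ∈ L, r f a := by
  classical
  induction F using Finset.induction_on with
  | empty => exact ⟨∅, subset_refl _, by simp, by simp⟩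
  | insert f F _ ih =>
    obtain ⟨L, hLF, hLpair, hLcover⟩ := ih
    by_cases hf : ∃ a ∈ L, r f a
    · refine ⟨L, hLF.trans (subset_insert f F), hLpair, fun g hg => ?_⟩
      rcases mem_insert.mp hg with rfl | hg
      exacts [hf, hLcover g hg]
    · push Not at hf
      refine ⟨insert f L, insert_subset_insert f hLF, ?_, fun g hg => ?_⟩
      · rw [coe_insert]
        exact hLpair.insert fun b hb _ => ⟨hf b hb, fun h => hf b hb (hsymm h)⟩
      · rcases mem_insert.mp hg with rfl | hg
        · exact ⟨g, mem_insert_self g L, hrefl g⟩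
        · obtain ⟨a, ha, hga⟩ := hLcover g hg
          exact ⟨a, mem_insert_of_mem ha, hga⟩

section StarAssoc

variable {R : Type*} [CommRing R] {σ : R →+* R} {a b c : R}

theorem StarAssoc.refl (σ : R →+* R) (a : R) : StarAssoc σ a a :=
  Or.inl (Associated.refl a)

theorem StarAssoc.symm (hσ : Function.Involutive σ) (h : StarAssoc σ a b) :
    StarAssoc σ b a := by
  rcases h with h | h
  · exact Or.inl h.symm
  · have h' := h.map σ
    rw [hσ] at h'
    exact Or.inr h'.symm

theorem StarAssoc.trans_associated (h : StarAssoc σ a b) (hbc : Associated b c) :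
    StarAssoc σ a c :=
  h.imp (fun h => h.trans hbc) fun h => h.trans (hbc.map σ)

end StarAssoc

section Coprimary

variable {K C R : Type*} [AddCommMonoid K] [AddCommGroup C] [CommRing R]
  {π : K →+ C} {χ : K → R} {l : R} {x y : C}

theorem Cco_subset_of_starAssoc {σ : R →+* R} (hD1 : ∀ k, Associated (σ (χ k)) (χ k))
    {μ : R} (h : StarAssoc σ l μ) : Cco π χ l ⊆ Cco π χ μ := by
  rintro _ ⟨k, rfl, hk⟩
  refine ⟨k, rfl, fun hμ => hk ?_⟩
  rcases h with h | h
  · exact h.dvd.trans hμ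
  · exact h.dvd.trans ((map_dvd σ hμ).trans (hD1 k).dvd)

theorem DeltaSet_subset_Cco (hl : ¬ IsUnit l) : DeltaSet π χ ⊆ Cco π χ l := by
  rintro _ ⟨k, rfl, hk⟩
  exact ⟨k, rfl, fun hlk => hl (isUnit_of_dvd_unit hlk hk)⟩

theorem DeltaSet.add_mem (hD2 : ∀ k k', Associated (χ (k + k')) (χ k * χ k'))
    (hx : x ∈ DeltaSet π χ) (hy : y ∈ DeltaSet π χ) : x + y ∈ DeltaSet π χ := by
  obtain ⟨k, rfl, hk⟩ := hx
  obtain ⟨k', rfl, hk'⟩ := hy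
  exact ⟨k + k', map_add π k k', (hD2 k k').symm.isUnit (hk.mul hk')⟩

theorem Cco.add_mem (hD2 : ∀ k k', Associated (χ (k + k')) (χ k * χ k')) (hl : Prime l)
    (hx : x ∈ Cco π χ l) (hy : y ∈ Cco π χ l) : x + y ∈ Cco π χ l := by
  obtain ⟨k, rfl, hk⟩ := hx
  obtain ⟨k', rfl, hk'⟩ := hy
  refine ⟨k + k', map_add π k k', fun hlk => ?_⟩
  rcases hl.dvd_or_dvd (hlk.trans (hD2 k k').dvd) with h | h
  exacts [hk h, hk' h]

theorem Cco.neg_mem (hD3 : ∀ k, ∃ j, π j = -π k ∧ Associated (χ j) (χ k))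
    (hx : x ∈ Cco π χ l) : -x ∈ Cco π χ l := by
  obtain ⟨k, rfl, hk⟩ := hx
  obtain ⟨j, hj, hjk⟩ := hD3 k
  exact ⟨j, hj, fun hlj => hk (hlj.trans hjk.dvd)⟩

theorem Cco.sub_mem (hD2 : ∀ k k', Associated (χ (k + k')) (χ k * χ k'))
    (hD3 : ∀ k, ∃ j, π j = -π k ∧ Associated (χ j) (χ k)) (hl : Prime l)
    (hx : x ∈ Cco π χ l) (hy : y ∈ Cco π χ l) : x - y ∈ Cco π χ l :=
  sub_eq_add_neg x y ▸ Cco.add_mem hD2 hl hx (Cco.neg_mem hD3 hy)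

theorem isUnit_chi_zero [IsDomain R] (hχ : ∀ k, χ k ≠ 0)
    (hD2 : ∀ k k', Associated (χ (k + k')) (χ k * χ k')) : IsUnit (χ 0) := by
  have h : Associated (χ 0 * 1) (χ 0 * χ 0) := by simpa using hD2 0 0
  exact (h.of_mul_left (Associated.refl _) (hχ 0)).isUnit isUnit_one

def coprimarySubgroup [IsDomain R] (hχ : ∀ k, χ k ≠ 0)
    (hD2 : ∀ k k', Associated (χ (k + k')) (χ k * χ k'))
    (hD3 : ∀ k, ∃ j, π j = -π k ∧ Associated (χ j) (χ k)) (hl : Prime l) : AddSubgroup C where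
  carrier := Cco π χ l
  zero_mem' := map_zero π ▸ DeltaSet_subset_Cco hl.not_isUnit ⟨0, rfl, isUnit_chi_zero hχ hD2⟩
  add_mem' := Cco.add_mem hD2 hl
  neg_mem' := Cco.neg_mem hD3

end Coprimary

/-- `L` is a set of representatives of the `*`-classes of prime factors of `χ k` that are
not `*`-associate to `l`. -/
theorem exists_finset_starAssoc_factors {K R : Type*} [CommRing R] [IsDomain R]
    [UniqueFactorizationMonoid R] {σ : R →+* R} {χ : K → R} (hσ : Function.Involutive σ)
    (hχ : ∀ k, χ k ≠ 0) (k : K) (l : R) :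
    ∃ L : Finset R, (∀ μ ∈ L, Irreducible μ ∧ ¬ StarAssoc σ l μ) ∧
      ((L : Set R).Pairwise fun a b => ¬ StarAssoc σ a b) ∧
      ∀ μ, Irreducible μ → ¬ StarAssoc σ l μ → μ ∣ χ k → ∃ μ' ∈ L, StarAssoc σ μ' μ := by
  classical
  obtain ⟨L, hLF, hLpair, hLcover⟩ := Finset.exists_subset_pairwise_not_rel_covering
    (StarAssoc.refl σ) (StarAssoc.symm hσ)
    ((UniqueFactorizationMonoid.factors (χ k)).toFinset.filter fun f => ¬ StarAssoc σ l f)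
  refine ⟨L, fun μ hμ => ?_, hLpair, fun μ hμ hlμ hμk => ?_⟩
  · obtain ⟨hμk, hlμ⟩ := Finset.mem_filter.mp (hLF hμ)
    exact ⟨UniqueFactorizationMonoid.irreducible_of_factor μ (Multiset.mem_toFinset.mp hμk), hlμ⟩
  · obtain ⟨f, hf, hμf⟩ := UniqueFactorizationMonoid.exists_mem_factors_of_dvd (hχ k) hμ hμk
    obtain ⟨μ', hμ', hfμ'⟩ := hLcover f <| Finset.mem_filter.mpr
      ⟨Multiset.mem_toFinset.mpr hf, fun hlf => hlμ (hlf.trans_associated hμf.symm)⟩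
    exact ⟨μ', hμ', (hfμ'.symm hσ).trans_associated hμf.symm⟩

section Extension

variable {K C R : Type*} [AddCommMonoid K] [AddCommGroup C]
  [CommRing R] [UniqueFactorizationMonoid R]
  {π : K →+ C} {σ : R →+* R} {χ : K → R} {A : AddSubgroup C}

theorem mem_DeltaSet_of_forall_mem_Cco
    (hD2 : ∀ k k', Associated (χ (k + k')) (χ k * χ k'))
    (hD3 : ∀ k, ∃ j, π j = -π k ∧ Associated (χ j) (χ k))
    (hA : RightPD σ (A : Set C) (DeltaSet π χ ∩ A) (fun l => Cco π χ l ∩ A))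
    (hG : RightPD σ (Set.univ : Set (C ⧸ A)) ((QuotientAddGroup.mk' A) '' DeltaSet π χ)
      (fun l => (QuotientAddGroup.mk' A) '' Cco π χ l))
    {g : C} (hg : ∀ l, Irreducible l → g ∈ Cco π χ l) : g ∈ DeltaSet π χ := by
  obtain ⟨δ, hδ, hδg⟩ := hG.1 g trivial fun l hl => ⟨g, hg l hl, rfl⟩
  have hgδ : g - δ ∈ A := (QuotientAddGroup.eq_iff_sub_mem).mp hδg.symm
  have hgδΔ : g - δ ∈ DeltaSet π χ := (hA.1 (g - δ) hgδ fun l hl =>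
    ⟨Cco.sub_mem hD2 hD3 hl.prime (hg l hl) (DeltaSet_subset_Cco hl.not_isUnit hδ), hgδ⟩).1
  simpa using DeltaSet.add_mem hD2 hδ hgδΔ

theorem exists_sub_mem_Cco_of_finset [IsDomain R] (hχ : ∀ k, χ k ≠ 0)
    (hD2 : ∀ k k', Associated (χ (k + k')) (χ k * χ k'))
    (hD3 : ∀ k, ∃ j, π j = -π k ∧ Associated (χ j) (χ k))
    (hA : RightPD σ (A : Set C) (DeltaSet π χ ∩ A) (fun l => Cco π χ l ∩ A))
    {L : Finset R} (hLirr : ∀ μ ∈ L, Irreducible μ)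
    (hLpair : (L : Set R).Pairwise fun a b => ¬ StarAssoc σ a b)
    {z : C} (hz : ∀ μ ∈ L, ∃ y ∈ Cco π χ μ, z - y ∈ A) :
    ∃ e ∈ A, (∀ μ ∈ L, z - e ∈ Cco π χ μ) ∧
      ∀ ν, Irreducible ν → (∀ μ ∈ L, ¬ StarAssoc σ μ ν) → e ∈ Cco π χ ν := by
  classical
  have hsplit : ∀ μ, ∃ y e : C, μ ∈ L → y ∈ Cco π χ μ ∧ e ∈ A ∧ z - y - e ∈ Cco π χ μ ∧
      ∀ ν, Irreducible ν → ¬ StarAssoc σ μ ν → e ∈ Cco π χ ν := by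
    intro μ
    by_cases hμ : μ ∈ L
    · obtain ⟨y, hy, hzy⟩ := hz μ hμ
      obtain ⟨e, heA, hzye, he⟩ := hA.2 _ hzy μ (hLirr μ hμ)
      exact ⟨y, e, fun _ => ⟨hy, heA, hzye.1, fun ν hν hμν => (he ν hν hμν).1⟩⟩
    · exact ⟨0, 0, fun h => absurd h hμ⟩
  choose y e he using hsplit
  -- `e μ'` lies in `C^μ` for `μ' ≠ μ` in `L`, because `L` is pairwise non-`*`-associate.
  let Q (ν : R) (hν : Irreducible ν) : AddSubgroup C := coprimarySubgroup hχ hD2 hD3 hν.prime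
  refine ⟨∑ μ ∈ L, e μ, sum_mem fun μ hμ => (he μ hμ).2.1, fun μ hμ => ?_,
    fun ν hν hνL => (Q ν hν).sum_mem fun μ hμ => (he μ hμ).2.2.2 ν hν (hνL μ hμ)⟩
  obtain ⟨hy, -, hzye, -⟩ := he μ hμ
  have hrest : ∑ μ' ∈ L.erase μ, e μ' ∈ Q μ (hLirr μ hμ) := sum_mem fun μ' hμ' =>
    (he μ' (Finset.mem_of_mem_erase hμ')).2.2.2 μ (hLirr μ hμ)
      (hLpair (Finset.mem_of_mem_erase hμ') hμ (Finset.ne_of_mem_erase hμ'))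
  have hsum : z - ∑ μ' ∈ L, e μ' = y μ + (z - y μ - e μ) - ∑ μ' ∈ L.erase μ, e μ' := by
    rw [← Finset.add_sum_erase L e hμ]
    abel
  rw [hsum]
  exact (Q μ (hLirr μ hμ)).sub_mem ((Q μ (hLirr μ hμ)).add_mem hy hzye) hrest

theorem exists_Cco_decomposition [IsDomain R] (hπ : Function.Surjective π)
    (hσ : Function.Involutive σ) (hχ : ∀ k, χ k ≠ 0) (hD1 : ∀ k, Associated (σ (χ k)) (χ k))
    (hD2 : ∀ k k', Associated (χ (k + k')) (χ k * χ k'))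
    (hD3 : ∀ k, ∃ j, π j = -π k ∧ Associated (χ j) (χ k))
    (hA : RightPD σ (A : Set C) (DeltaSet π χ ∩ A) (fun l => Cco π χ l ∩ A))
    (hG : RightPD σ (Set.univ : Set (C ⧸ A)) ((QuotientAddGroup.mk' A) '' DeltaSet π χ)
      (fun l => (QuotientAddGroup.mk' A) '' Cco π χ l))
    (c : C) {l : R} (hl : Irreducible l) :
    ∃ d, c - d ∈ Cco π χ l ∧ ∀ μ, Irreducible μ → ¬ StarAssoc σ l μ → d ∈ Cco π χ μ := by
  obtain ⟨_, -, ⟨x, hx, hxc⟩, hpure⟩ := hG.2 c trivial l hl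
  set z := c - x with hz
  have hzA : ∀ μ, Irreducible μ → ¬ StarAssoc σ l μ → ∃ y ∈ Cco π χ μ, z - y ∈ A := by
    intro μ hμ hlμ
    obtain ⟨y, hy, hyz⟩ := hpure μ hμ hlμ
    refine ⟨y, hy, QuotientAddGroup.eq_iff_sub_mem.mp ?_⟩
    simp only [QuotientAddGroup.mk'_apply] at hxc hyz
    rw [hz, QuotientAddGroup.mk_sub, hxc, hyz, sub_sub_cancel]
  obtain ⟨k, hk⟩ := hπ z
  obtain ⟨L, hL, hLpair, hLcover⟩ := exists_finset_starAssoc_factors hσ hχ k l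
  obtain ⟨e, -, hze, he⟩ := exists_sub_mem_Cco_of_finset hχ hD2 hD3 hA
    (fun μ hμ => (hL μ hμ).1) hLpair fun μ hμ => hzA μ (hL μ hμ).1 (hL μ hμ).2
  refine ⟨z - e, ?_, fun μ hμ hlμ => ?_⟩
  · rw [show c - (z - e) = x + e by rw [hz]; abel]
    exact Cco.add_mem hD2 hl.prime hx (he l hl fun μ hμ hμl => (hL μ hμ).2 (hμl.symm hσ))
  · by_cases hcov : ∃ μ' ∈ L, StarAssoc σ μ' μ
    · obtain ⟨μ', hμ', hμ'μ⟩ := hcov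
      exact Cco_subset_of_starAssoc hD1 hμ'μ (hze μ' hμ')
    · have hzμ : z ∈ Cco π χ μ := ⟨k, hk, fun hμk => hcov (hLcover μ hμ hlμ hμk)⟩
      exact Cco.sub_mem hD2 hD3 hμ.prime hzμ (he μ hμ fun μ' hμ' h => hcov ⟨μ', hμ', h⟩)

end Extension

/-- If a subgroup `A ≤ C` and the quotient `G = C ⧸ A` are right primary decomposable,
then so is `C`. -/
theorem statement6
    {K C R : Type*} [AddCommMonoid K] [AddCommGroup C]
    [CommRing R] [IsDomain R] [UniqueFactorizationMonoid R]
    (π : K →+ C) (hπ : Function.Surjective π)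
    (σ : R →+* R) (hσ : ∀ r, σ (σ r) = r)
    (χ : K → R) (hχ : ∀ k, χ k ≠ 0)
    (hD1 : ∀ k, Associated (σ (χ k)) (χ k))
    (hD2 : ∀ k k', Associated (χ (k + k')) (χ k * χ k'))
    (hD3 : ∀ k, ∃ j, π j = -π k ∧ Associated (χ j) (χ k))
    (A : AddSubgroup C)
    (hA : RightPD σ (A : Set C) (DeltaSet π χ ∩ A) (fun l => Cco π χ l ∩ A))
    (hG : RightPD σ (Set.univ : Set (C ⧸ A))
      ((QuotientAddGroup.mk' A) '' DeltaSet π χ)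
      (fun l => (QuotientAddGroup.mk' A) '' Cco π χ l)) :
    RightPD σ (Set.univ : Set C) (DeltaSet π χ) (Cco π χ) :=
  ⟨fun _ _ hg => mem_DeltaSet_of_forall_mem_Cco hD2 hD3 hA hG hg,
    fun c _ _ hl => (exists_Cco_decomposition hπ hσ hχ hD1 hD2 hD3 hA hG c hl).imp
      fun _ h => ⟨trivial, h⟩⟩
end

section
/- Let A be a subgroup of C and q : C → G := C/A the quotient map. Suppose A is strongly primary decomposable: for every k ∈ K with π(k) ∈ A one can write π(k) = d + a_1 + … + a_n with d ∈ Δ ∩ A and a_i ∈ C_{λ_i} ∩ A, where each λ_i is an irreducible divisor of Δ_k; and whenever a_1 + … + a_n ∈ Δ ∩ A with a_i ∈ C_{λ_i} ∩ A for pairwise non-*-associate irreducibles λ_i, each a_i ∈ Δ ∩ A. Suppose also G is strongly primary decomposable: for every k ∈ K one can write q(π(k)) = d + g_1 + … + g_n with d ∈ q(Δ) and g_i ∈ q(C_{λ_i}), where each λ_i is an irreducible divisor of Δ_k; and the analogous uniqueness holds with q(Δ) and q(C_λ). Then C is strongly primary decomposable: for every k ∈ K one can write π(k) = d + c_1 +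 … + c_n with d ∈ Δ and c_i ∈ C_{λ_i}, where each λ_i is an irreducible divisor of Δ_k, and whenever c_1 + … + c_n ∈ Δ with c_i ∈ C_{λ_i} for pairwise non-*-associate irreducibles λ_i, each c_i ∈ Δ. -/
/-- Strong primary decomposability for the image under `p : K → G` of the sub-monoid
`SK ⊆ K`, relative to a designated subset `D` ("`Δ`") and primary parts `P λ` in `G`:
(strong existence) for `k ∈ SK`, `p k` is `D` plus a finite sum of `λᵢ`-primary
elements where each `λᵢ` is an irreducible divisor of `χ k`; (uniqueness) a sum of
primary elements along pairwise non-`*`-associate irreducibles lying in `D` has all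
summands in `D`. -/
def StrongPD {K R G : Type*} [AddCommMonoid K] [CommRing R] [AddCommGroup G]
    (σ : R →+* R) (χ : K → R) (p : K → G) (SK : Set K)
    (D : Set G) (P : R → Set G) : Prop :=
  (∀ k ∈ SK, ∃ d ∈ D, ∃ n : ℕ, ∃ lam : Fin n → R, ∃ cs : Fin n → G,
    (∀ i, Irreducible (lam i) ∧ lam i ∣ χ k) ∧
    (∀ i, cs i ∈ P (lam i)) ∧ p k = d + ∑ i, cs i) ∧
  (∀ (n : ℕ) (lam : Fin n → R) (cs : Fin n → G),
    (∀ i, Irreducible (lam i)) →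
    (∀ i j, i ≠ j → ¬ StarAssoc σ (lam i) (lam j)) →
    (∀ i, cs i ∈ P (lam i)) →
    (∑ i, cs i) ∈ D → ∀ i, cs i ∈ D)

def PrimaryDecompExists {K R G : Type*} [AddCommMonoid K] [CommRing R] [AddCommGroup G]
    (χ : K → R) (p : K → G) (SK : Set K) (D : Set G) (P : R → Set G) : Prop :=
  ∀ k ∈ SK, ∃ d ∈ D, ∃ n : ℕ, ∃ lam : Fin n → R, ∃ cs : Fin n → G,
    (∀ i, Irreducible (lam i) ∧ lam i ∣ χ k) ∧
    (∀ i, cs i ∈ P (lam i)) ∧ p k = d + ∑ i, cs i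

def PrimaryDecompUnique {R G : Type*} [CommRing R] [AddCommGroup G]
    (σ : R →+* R) (D : Set G) (P : R → Set G) : Prop :=
  ∀ (n : ℕ) (lam : Fin n → R) (cs : Fin n → G),
    (∀ i, Irreducible (lam i)) →
    (∀ i j, i ≠ j → ¬ StarAssoc σ (lam i) (lam j)) →
    (∀ i, cs i ∈ P (lam i)) →
    (∑ i, cs i) ∈ D → ∀ i, cs i ∈ D

theorem strongPD_iff {K R G : Type*} [AddCommMonoid K] [CommRing R] [AddCommGroup G]
    (σ : R →+* R) (χ : K → R) (p : K → G) (SK : Set K) (D : Set G) (P : R → Set G) :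
    StrongPD σ χ p SK D P ↔ PrimaryDecompExists χ p SK D P ∧ PrimaryDecompUnique σ D P :=
  Iff.rfl

theorem isUnit_of_associated_mul_self {M : Type*} [CommMonoidWithZero M] [IsLeftCancelMulZero M]
    {a : M} (ha : a ≠ 0) (h : Associated a (a * a)) : IsUnit a := by
  obtain ⟨u, hu⟩ := h
  exact mul_left_cancel₀ ha hu ▸ u.isUnit

section Submonoids

variable {R : Type*} [CommMonoidWithZero R]

def associatedPowers (s : R) : Submonoid R where
  carrier := {r | ∃ n : ℕ, Associated r (s ^ n)}
  one_mem' := ⟨0, by rw [pow_zero]⟩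
  mul_mem' := by
    rintro a b ⟨m, hm⟩ ⟨n, hn⟩
    exact ⟨m + n, pow_add s m n ▸ hm.mul_mul hn⟩

def primeDivisorsDvd (a : R) : Submonoid R where
  carrier := {r | ∀ p, Prime p → p ∣ r → p ∣ a}
  one_mem' := fun _ hp h => absurd (isUnit_of_dvd_one h) hp.not_isUnit
  mul_mem' := fun ha hb p hp h => (hp.dvd_or_dvd h).elim (ha p hp) (hb p hp)

theorem mem_primeDivisorsDvd {a r : R} :
    r ∈ primeDivisorsDvd a ↔ ∀ p, Prime p → p ∣ r → p ∣ a :=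
  Iff.rfl

theorem associated_mem_associatedPowers {s a b : R} (h : Associated a b)
    (ha : a ∈ associatedPowers s) : b ∈ associatedPowers s :=
  let ⟨n, hn⟩ := ha
  ⟨n, h.symm.trans hn⟩

theorem associated_mem_primeDivisorsDvd {r a b : R} (h : Associated a b)
    (ha : a ∈ primeDivisorsDvd r) : b ∈ primeDivisorsDvd r :=
  mem_primeDivisorsDvd.2 fun p hp hpb => mem_primeDivisorsDvd.1 ha p hp (hpb.trans h.symm.dvd)

theorem isUnit_submonoid_le_associatedPowers (s : R) : IsUnit.submonoid R ≤ associatedPowers s :=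
  fun _ hr => ⟨0, by rwa [pow_zero, associated_one_iff_isUnit]⟩

theorem isUnit_submonoid_le_primeDivisorsDvd (a : R) : IsUnit.submonoid R ≤ primeDivisorsDvd a :=
  fun _ hr => mem_primeDivisorsDvd.2 fun _ hp hpr =>
    absurd (isUnit_of_dvd_unit hpr hr) hp.not_isUnit

end Submonoids

theorem sdual_dvd_mul_map {R : Type*} [CommRing R] (σ : R →+* R) (l : R) :
    Sdual σ l ∣ l * σ l := by
  unfold Sdual
  split
  · exact dvd_mul_right _ _
  · exact dvd_rfl

theorem associatedPowers_sdual_le_primeDivisorsDvd {R : Type*} [CommRing R] {σ : R →+* R}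
    {l a : R} (hl : l ∣ a) (hσa : σ a ∣ a) :
    associatedPowers (Sdual σ l) ≤ primeDivisorsDvd a := by
  rintro r ⟨n, hn⟩
  refine mem_primeDivisorsDvd.2 fun p hp hpr => ?_
  have hpS : p ∣ Sdual σ l := hp.dvd_of_dvd_pow (hpr.trans hn.dvd)
  rcases hp.dvd_or_dvd (hpS.trans (sdual_dvd_mul_map σ l)) with h | h
  · exact h.trans hl
  · exact h.trans ((map_dvd σ hl).trans hσa)

section ClassSubgroup

variable {K C R : Type*} [AddCommMonoid K] [AddCommGroup C] [CommMonoid R]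
  (π : K →+ C) (χ : K → R) (h0 : IsUnit (χ 0))
  (hD2 : ∀ k k', Associated (χ (k + k')) (χ k * χ k'))
  (hD3 : ∀ k, ∃ j, π j = -π k ∧ Associated (χ j) (χ k))

def classSubgroup (M : Submonoid R) (hM : ∀ {a b}, Associated a b → a ∈ M → b ∈ M) :
    AddSubgroup C where
  carrier := {c | ∃ k, π k = c ∧ χ k ∈ M}
  zero_mem' := ⟨0, map_zero π, hM (associated_one_iff_isUnit.mpr h0).symm M.one_mem⟩
  add_mem' := by
    rintro _ _ ⟨k, rfl, hk⟩ ⟨k', rfl, hk'⟩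
    exact ⟨k + k', map_add π k k', hM (hD2 k k').symm (M.mul_mem hk hk')⟩
  neg_mem' := by
    rintro _ ⟨k, rfl, hk⟩
    obtain ⟨j, hj, hjk⟩ := hD3 k
    exact ⟨j, hj, hM hjk.symm hk⟩

end ClassSubgroup

section Subgroups

variable {K C R : Type*} [AddCommMonoid K] [AddCommGroup C] [CommRing R]
  (π : K →+ C) (σ : R →+* R) (χ : K → R) (h0 : IsUnit (χ 0))
  (hD2 : ∀ k k', Associated (χ (k + k')) (χ k * χ k'))
  (hD3 : ∀ k, ∃ j, π j = -π k ∧ Associated (χ j) (χ k))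

-- The carriers are definitionally `DeltaSet π χ` and `Cprim σ π χ l`.
def deltaSubgroup : AddSubgroup C :=
  classSubgroup π χ h0 hD2 hD3 (IsUnit.submonoid R) fun h ha => h.isUnit ha

noncomputable def primarySubgroup (l : R) : AddSubgroup C :=
  classSubgroup π χ h0 hD2 hD3 (associatedPowers (Sdual σ l)) associated_mem_associatedPowers

theorem deltaSubgroup_le_primarySubgroup (l : R) :
    deltaSubgroup π χ h0 hD2 hD3 ≤ primarySubgroup π σ χ h0 hD2 hD3 l :=
  fun _ ⟨k, hk, hkM⟩ => ⟨k, hk, isUnit_submonoid_le_associatedPowers _ hkM⟩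

end Subgroups

open QuotientAddGroup

theorem primaryDecompUnique_of_quotient {R G : Type*} [CommRing R] [AddCommGroup G]
    {σ : R →+* R} {A D : AddSubgroup G} {P : R → AddSubgroup G} (hDP : ∀ l, D ≤ P l)
    (hA : PrimaryDecompUnique σ ((D : Set G) ∩ A) fun l => (P l : Set G) ∩ A)
    (hG : PrimaryDecompUnique σ (mk' A '' D) fun l => mk' A '' P l) :
    PrimaryDecompUnique σ (D : Set G) fun l => (P l : Set G) := by
  intro n lam cs hirr hnass hcs hsum
  obtain ⟨ds, hds⟩ : ∃ ds : Fin n → G, ∀ i, ds i ∈ D ∧ cs i - ds i ∈ A := by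
    have hq := hG n lam (fun i => mk' A (cs i)) hirr hnass (fun i => ⟨cs i, hcs i, rfl⟩)
      ⟨_, hsum, map_sum _ _ _⟩
    choose ds hds hdq using hq
    exact ⟨ds, fun i => ⟨hds i, eq_iff_sub_mem.1 (hdq i).symm⟩⟩
  have hdiff := hA n lam (fun i => cs i - ds i) hirr hnass
    (fun i => ⟨sub_mem (hcs i) (hDP _ (hds i).1), (hds i).2⟩)
    ⟨by rw [Finset.sum_sub_distrib]; exact sub_mem hsum (sum_mem fun i _ => (hds i).1),
      sum_mem fun i _ => (hds i).2⟩
  intro i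
  simpa only [sub_add_cancel, SetLike.mem_coe] using add_mem (hdiff i).1 (hds i).1

theorem exists_eq_sub_sum_mem_primeDivisorsDvd {K C R : Type*} [AddCommMonoid K]
    [AddCommGroup C] [CommRing R] {π : K →+ C} {σ : R →+* R} {χ : K → R} (h0 : IsUnit (χ 0))
    (hD1 : ∀ k, Associated (σ (χ k)) (χ k))
    (hD2 : ∀ k k', Associated (χ (k + k')) (χ k * χ k'))
    (hD3 : ∀ k, ∃ j, π j = -π k ∧ Associated (χ j) (χ k)) {k : K} {d : C}
    (hd : d ∈ DeltaSet π χ) {n : ℕ} {lam : Fin n → R} {cs : Fin n → C}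
    (hlam : ∀ i, lam i ∣ χ k) (hcs : ∀ i, cs i ∈ Cprim σ π χ (lam i)) :
    ∃ k', π k' = π k - (d + ∑ i, cs i) ∧ χ k' ∈ primeDivisorsDvd (χ k) := by
  let supp := classSubgroup π χ h0 hD2 hD3 (primeDivisorsDvd (χ k))
    associated_mem_primeDivisorsDvd
  have hk : π k ∈ supp := ⟨k, rfl, fun _ _ h => h⟩
  have hd : d ∈ supp := by
    obtain ⟨kd, hkd, hu⟩ := hd
    exact ⟨kd, hkd, isUnit_submonoid_le_primeDivisorsDvd _ hu⟩
  have hcs : ∀ i, cs i ∈ supp := by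
    intro i
    obtain ⟨ki, hki, hpow⟩ := hcs i
    exact ⟨ki, hki, associatedPowers_sdual_le_primeDivisorsDvd (hlam i) (hD1 k).dvd hpow⟩
  exact sub_mem hk (add_mem hd (sum_mem fun i _ => hcs i))

theorem primaryDecompExists_of_quotient {K C R : Type*} [AddCommMonoid K] [AddCommGroup C]
    [CommRing R] [IsDomain R] [UniqueFactorizationMonoid R]
    {π : K →+ C} {σ : R →+* R} {χ : K → R} (h0 : IsUnit (χ 0))
    (hD1 : ∀ k, Associated (σ (χ k)) (χ k))
    (hD2 : ∀ k k', Associated (χ (k + k')) (χ k * χ k'))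
    (hD3 : ∀ k, ∃ j, π j = -π k ∧ Associated (χ j) (χ k)) {A : AddSubgroup C}
    (hA : PrimaryDecompExists χ (fun k => π k) {k | π k ∈ A} (DeltaSet π χ ∩ A)
      fun l => Cprim σ π χ l ∩ A)
    (hG : PrimaryDecompExists χ (fun k => mk' A (π k)) Set.univ (mk' A '' DeltaSet π χ)
      fun l => mk' A '' Cprim σ π χ l) :
    PrimaryDecompExists χ (fun k => π k) Set.univ (DeltaSet π χ) (Cprim σ π χ) := by
  intro k _
  obtain ⟨_, ⟨d, hd, rfl⟩, n, lam, gs, hlam, hgs, hsum⟩ := hG k trivial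
  choose cs hcs hcq using hgs
  obtain ⟨k', hk', hk'supp⟩ :=
    exists_eq_sub_sum_mem_primeDivisorsDvd h0 hD1 hD2 hD3 hd (fun i => (hlam i).2) hcs
  have hk'A : π k' ∈ A := hk' ▸ eq_iff_sub_mem.1 (by simpa [← hcq] using hsum)
  obtain ⟨d', hd', m, mu, as, hmu, has, hsum'⟩ := hA k' hk'A
  refine ⟨d + d', (deltaSubgroup π χ h0 hD2 hD3).add_mem hd hd'.1, n + m,
    Fin.addCases lam mu, Fin.addCases cs as, ?_, ?_, ?_⟩
  · refine Fin.addCases (fun i => ?_) (fun j => ?_)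
    · simpa using hlam i
    · simp only [Fin.addCases_right]
      exact ⟨(hmu j).1, hk'supp _ (hmu j).1.prime (hmu j).2⟩
  · refine Fin.addCases (fun i => ?_) (fun j => ?_)
    · simpa using hcs i
    · simpa using (has j).1
  · rw [Fin.sum_univ_add]
    simp only [Fin.addCases_left, Fin.addCases_right]
    have hrem : π k - (d + ∑ i, cs i) = d' + ∑ i, as i := hk' ▸ hsum'
    rw [sub_eq_iff_eq_add.1 hrem]
    abel

theorem statement7_general
    {K C R : Type*} [AddCommMonoid K] [AddCommGroup C]
    [CommRing R] [IsDomain R] [UniqueFactorizationMonoid R]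
    (π : K →+ C)
    (σ : R →+* R)
    (χ : K → R) (hχ : ∀ k, χ k ≠ 0)
    (hD1 : ∀ k, Associated (σ (χ k)) (χ k))
    (hD2 : ∀ k k', Associated (χ (k + k')) (χ k * χ k'))
    (hD3 : ∀ k, ∃ j, π j = -π k ∧ Associated (χ j) (χ k))
    (A : AddSubgroup C)
    (hA : StrongPD σ χ (fun k => π k) {k | π k ∈ A}
      (DeltaSet π χ ∩ A) (fun l => Cprim σ π χ l ∩ A))
    (hG : StrongPD σ χ (fun k => QuotientAddGroup.mk' A (π k)) Set.univ
      ((QuotientAddGroup.mk' A) '' DeltaSet π χ)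
      (fun l => (QuotientAddGroup.mk' A) '' Cprim σ π χ l)) :
    StrongPD σ χ (fun k => π k) Set.univ (DeltaSet π χ) (Cprim σ π χ) := by
  have h0 : IsUnit (χ 0) :=
    isUnit_of_associated_mul_self (hχ 0) (by simpa only [add_zero] using hD2 0 0)
  rw [strongPD_iff] at hA hG ⊢
  exact ⟨primaryDecompExists_of_quotient h0 hD1 hD2 hD3 hA.1 hG.1,
    primaryDecompUnique_of_quotient (deltaSubgroup_le_primarySubgroup π σ χ h0 hD2 hD3)
      hA.2 hG.2⟩

/-- If a subgroup `A ≤ C` and the quotient `G = C ⧸ A` are strongly primary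
decomposable, then so is `C`. -/
theorem statement7
    {K C R : Type*} [AddCommMonoid K] [AddCommGroup C]
    [CommRing R] [IsDomain R] [UniqueFactorizationMonoid R]
    (π : K →+ C) (hπ : Function.Surjective π)
    (σ : R →+* R) (hσ : ∀ r, σ (σ r) = r)
    (χ : K → R) (hχ : ∀ k, χ k ≠ 0)
    (hD1 : ∀ k, Associated (σ (χ k)) (χ k))
    (hD2 : ∀ k k', Associated (χ (k + k')) (χ k * χ k'))
    (hD3 : ∀ k, ∃ j, π j = -π k ∧ Associated (χ j) (χ k))
    (A : AddSubgroup C)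
    (hA : StrongPD σ χ (fun k => π k) {k | π k ∈ A}
      (DeltaSet π χ ∩ A) (fun l => Cprim σ π χ l ∩ A))
    (hG : StrongPD σ χ (fun k => QuotientAddGroup.mk' A (π k)) Set.univ
      ((QuotientAddGroup.mk' A) '' DeltaSet π χ)
      (fun l => (QuotientAddGroup.mk' A) '' Cprim σ π χ l)) :
    StrongPD σ χ (fun k => π k) Set.univ (DeltaSet π χ) (Cprim σ π χ) :=
  statement7_general π σ χ hχ hD1 hD2 hD3 A hA hG
end
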